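/- arXiv:2104.06565 — 2 statements merged into one kernel-verified Lean document; each statement's English description precedes it below -/
import Mathlib

section
/- Fix p ∈ (0,1/2) and define f : [0,1] → [0,1] by f(α) = 0 for 0 ≤ α < p; f(α) = D(α‖p)/(2·D(1/2‖p)) for p ≤ α ≤ 1/2; f(α) = 1 − f(1−α) for 1/2 < α < 1−p; and f(α) = 1 for 1−p ≤ α ≤ 1. Then for all α ∈ [0,1], f(α) ≤ D(α‖p)/(2·D(1/2‖p)). -/
noncomputable def binRelEnt (a b : ℝ) : ℝ :=
  a * Real.log (a / b) + (1 - a) * Real.log ((1 - a) / (1 - b))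

noncomputable def fTeach (p α : ℝ) : ℝ :=
  if α < p then 0
  else if α ≤ 1/2 then binRelEnt α p / (2 * binRelEnt (1/2) p)
  else if α < 1 - p then 1 - binRelEnt (1 - α) p / (2 * binRelEnt (1/2) p)
  else 1

open Real in
lemma binRelEnt_eq (p x : ℝ) (hp0 : 0 < p) (hp1 : p < 1) (hx : x ∈ Set.Icc (0:ℝ) 1) :
    binRelEnt x p = x * log x + (1-x) * log (1-x) +
      ((log (1-p) - log p) * x + (- log (1-p))) := by
  obtain ⟨hx0, hx1⟩ := hx
  have h1 : x * log (x / p) = x * log x - x * log p := by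
    rcases eq_or_lt_of_le hx0 with h | h
    · simp [← h]
    · rw [log_div (ne_of_gt h) (ne_of_gt hp0)]; ring
  have h2 : (1-x) * log ((1-x) / (1-p)) = (1-x) * log (1-x) - (1-x) * log (1-p) := by
    rcases eq_or_lt_of_le (sub_nonneg.mpr hx1) with h | h
    · simp [← h]
    · rw [log_div (ne_of_gt h) (by linarith)]; ring
  rw [binRelEnt, h1, h2]; ring

open Real in
lemma binRelEnt_convex (p : ℝ) (hp0 : 0 < p) (hp1 : p < 1) :
    ConvexOn ℝ (Set.Icc (0:ℝ) 1) (fun x => binRelEnt x p) := by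
  have hA : ConvexOn ℝ (Set.Icc (0:ℝ) 1) (fun x => x * log x) :=
    convexOn_mul_log.subset (fun x hx => hx.1) (convex_Icc 0 1)
  have hB : ConvexOn ℝ (Set.Icc (0:ℝ) 1) (fun x => (1-x) * log (1-x)) := by
    have := convexOn_mul_log.comp_affineMap (AffineMap.lineMap (1:ℝ) (0:ℝ))
    refine (this.subset (fun x hx => ?_) (convex_Icc 0 1)).congr (fun x hx => ?_)
    · simp only [Set.mem_preimage, AffineMap.lineMap_apply, Set.mem_Ici]
      simp only [smul_eq_mul, vsub_eq_sub, vadd_eq_add]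
      obtain ⟨h0, h1⟩ := hx; nlinarith
    · simp only [Function.comp_apply, AffineMap.lineMap_apply, smul_eq_mul, vsub_eq_sub,
        vadd_eq_add]
      ring_nf
  have hL : ConvexOn ℝ (Set.Icc (0:ℝ) 1)
      (fun x => (log (1-p) - log p) * x + (- log (1-p))) := by
    have h := ((log (1-p) - log p) • (LinearMap.id : ℝ →ₗ[ℝ] ℝ)).convexOn (convex_Icc (0:ℝ) 1)
    have := h.add (convexOn_const (- log (1-p)) (convex_Icc (0:ℝ) 1))
    exact this.congr (fun x hx => by simp)
  exact ((hA.add hB).add hL).congr (fun x hx => (binRelEnt_eq p x hp0 hp1 hx).symm)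

open Real in
lemma binRelEnt_nonneg (p x : ℝ) (hp0 : 0 < p) (hp1 : p < 1) (hx : x ∈ Set.Icc (0:ℝ) 1) :
    0 ≤ binRelEnt x p := by
  obtain ⟨hx0, hx1⟩ := hx
  have key : ∀ a b : ℝ, 0 ≤ a → 0 < b → a - b ≤ a * log (a / b) := by
    intro a b ha hb
    rcases eq_or_lt_of_le ha with h | h
    · simp [← h]; linarith
    · have hd : 0 < b / a := div_pos hb h
      have := Real.log_le_sub_one_of_pos hd
      have hlog : log (a/b) = - log (b/a) := by
        rw [← Real.log_inv]; congr 1; field_simp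
      rw [hlog]
      have h2 : a * (b/a - 1) = b - a := by field_simp
      nlinarith [mul_le_mul_of_nonneg_left this (le_of_lt h)]
  have k1 := key x p hx0 hp0
  have k2 := key (1-x) (1-p) (by linarith) (by linarith)
  unfold binRelEnt
  nlinarith

open Real in
lemma binRelEnt_half_pos (p : ℝ) (hp0 : 0 < p) (hp2 : p < 1/2) :
    0 < binRelEnt (1/2) p := by
  have hp1 : p < 1 := by linarith
  have heq := binRelEnt_eq p (1/2) hp0 hp1 (by norm_num)
  have hl2 : Real.log (1/2) = - Real.log 2 := by
    rw [show (1/2 : ℝ) = 2⁻¹ by norm_num, Real.log_inv]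
  have h4 : Real.log (4*p*(1-p)) = 2 * Real.log 2 + Real.log p + Real.log (1-p) := by
    rw [Real.log_mul (by positivity) (by linarith), Real.log_mul (by norm_num) (ne_of_gt hp0),
      show (4:ℝ) = 2^2 by norm_num, Real.log_pow]
    push_cast; ring
  have hlt : 4*p*(1-p) < 1 := by nlinarith
  have hpos : (0:ℝ) < 4*p*(1-p) := by nlinarith
  have hneg := Real.log_neg hpos hlt
  rw [heq]
  rw [hl2]
  norm_num
  nlinarith [h4, hneg]

open Real in
lemma binRelEnt_self (p : ℝ) (hp0 : 0 < p) (hp1 : p < 1) : binRelEnt p p = 0 := by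
  unfold binRelEnt
  rw [div_self (ne_of_gt hp0), div_self (by linarith : (1:ℝ) - p ≠ 0), Real.log_one]
  ring

theorem fTeach_le (p : ℝ) (hp : p ∈ Set.Ioo (0 : ℝ) (1/2)) :
    ∀ α ∈ Set.Icc (0 : ℝ) 1, fTeach p α ≤ binRelEnt α p / (2 * binRelEnt (1/2) p) := by
  obtain ⟨hp0, hp2⟩ := hp
  have hp1 : p < 1 := by linarith
  intro α hα
  obtain ⟨hα0, hα1⟩ := hα
  have hhalf := binRelEnt_half_pos p hp0 hp2
  have hden : 0 < 2 * binRelEnt (1/2) p := by linarith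
  unfold fTeach
  split_ifs with h1 h2 h3
  · exact div_nonneg (binRelEnt_nonneg p α hp0 hp1 ⟨hα0, hα1⟩) (le_of_lt hden)
  · exact le_refl _
  · -- 1/2 < α < 1 - p
    push_neg at h1 h2
    rw [sub_le_iff_le_add, ← add_div, le_div_iff₀ hden, one_mul]
    have e1 := binRelEnt_eq p α hp0 hp1 ⟨hα0, hα1⟩
    have e2 := binRelEnt_eq p (1-α) hp0 hp1 ⟨by linarith, by linarith⟩
    have e3 := binRelEnt_eq p (1/2) hp0 hp1 (by norm_num)
    rw [show (1:ℝ) - (1-α) = α by ring] at e2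
    have hent := Real.binEntropy_le_log_two (p := α)
    rw [Real.binEntropy, Real.log_inv, Real.log_inv] at hent
    have hl2 : Real.log (1/2) = - Real.log 2 := by
      rw [show (1/2 : ℝ) = 2⁻¹ by norm_num, Real.log_inv]
    rw [e1, e2, e3, hl2]
    nlinarith [hent]
  · -- α ≥ 1 - p
    push_neg at h1 h2 h3
    rw [le_div_iff₀ hden, one_mul]
    have hαp : 0 < α - p := by linarith
    set t : ℝ := (α - 1/2)/(α - p) with ht_def
    set s : ℝ := (1/2 - p)/(α - p) with hs_def
    have ht : 0 ≤ t := div_nonneg (by linarith) (le_of_lt hαp)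
    have hs : 0 ≤ s := div_nonneg (by linarith) (le_of_lt hαp)
    have hts : t + s = 1 := by
      rw [ht_def, hs_def, ← add_div, div_eq_one_iff_eq (ne_of_gt hαp)]; ring
    have hmid : t * p + s * α = 1/2 := by
      rw [ht_def, hs_def]
      field_simp
      ring
    have hconv := (binRelEnt_convex p hp0 hp1).2 (x := p) (y := α)
      ⟨le_of_lt hp0, le_of_lt hp1⟩ ⟨hα0, hα1⟩ ht hs hts
    simp only [smul_eq_mul] at hconv
    rw [hmid, binRelEnt_self p hp0 hp1, mul_zero, zero_add] at hconv
    have hs' : s ≤ 1/2 := by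
      rw [hs_def, div_le_iff₀ hαp]; linarith
    have hDα : 0 ≤ binRelEnt α p := binRelEnt_nonneg p α hp0 hp1 ⟨hα0, hα1⟩
    nlinarith [mul_le_mul_of_nonneg_right hs' hDα]
end

section
/- Let μ_P, μ_Q : [0,1] → ℝ be continuous convex functions with μ_P(0)=μ_P(1)=μ_Q(0)=μ_Q(1)=0 (and differentiable on (0,1)). Let μ* = min_{s∈[0,1]} max(μ_P(s), μ_Q(s)). Then there exists γ ∈ [0,1] such that for all s ∈ [0,1], γ·μ_P(s) + (1−γ)·μ_Q(s) ≥ μ*. -/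
open Set Filter Topology

/-- Gradient inequality for a convex function on `Icc 0 1`. -/
private lemma gradIneq {f : ℝ → ℝ} {x y f' : ℝ} (hfc : ConvexOn ℝ (Set.Icc 0 1) f)
    (hx : x ∈ Set.Icc (0:ℝ) 1) (hy : y ∈ Set.Icc (0:ℝ) 1) (hd : HasDerivAt f f' x) :
    f x + f' * (y - x) ≤ f y := by
  rcases lt_trichotomy x y with h | h | h
  · have hs := hfc.le_slope_of_hasDerivAt hx hy h hd
    rw [slope_def_field] at hs
    have hyx : 0 < y - x := by linarith
    have := (le_div_iff₀ hyx).mp hs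
    linarith
  · subst h; simp
  · have hs := hfc.slope_le_of_hasDerivAt hy hx h hd
    rw [slope_def_field] at hs
    have hxy : 0 < x - y := by linarith
    have h2 := (div_le_iff₀ hxy).mp hs
    have h3 : f' * (y - x) = -(f' * (x - y)) := by ring
    linarith

/-- If two functions both have positive derivative at an interior point, they both strictly
decrease slightly to the left. -/
private lemma dec_left {f g : ℝ → ℝ} {x p q : ℝ} (hx : x ∈ Set.Ioo (0:ℝ) 1)
    (hp : HasDerivAt f p x) (hq : HasDerivAt g q x) (hp0 : 0 < p) (hq0 : 0 < q) :
    ∃ s ∈ Set.Icc (0:ℝ) 1, f s < f x ∧ g s < g x := by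
  have hmono : 𝓝[<] x ≤ 𝓝[≠] x :=
    nhdsWithin_mono x (fun y hy => Set.mem_compl_singleton_iff.mpr (ne_of_lt hy))
  have hPt : Tendsto (slope f x) (𝓝[<] x) (𝓝 p) :=
    (hasDerivAt_iff_tendsto_slope.mp hp).mono_left hmono
  have hQt : Tendsto (slope g x) (𝓝[<] x) (𝓝 q) :=
    (hasDerivAt_iff_tendsto_slope.mp hq).mono_left hmono
  have e1 : ∀ᶠ s in 𝓝[<] x, 0 < slope f x s := hPt.eventually (eventually_gt_nhds hp0)
  have e2 : ∀ᶠ s in 𝓝[<] x, 0 < slope g x s := hQt.eventually (eventually_gt_nhds hq0)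
  have e3 : ∀ᶠ s in 𝓝[<] x, 0 < s :=
    ((eventually_gt_nhds hx.1).filter_mono nhdsWithin_le_nhds)
  have e4 : ∀ᶠ s in 𝓝[<] x, s < x := eventually_mem_nhdsWithin
  obtain ⟨s, h1, h2, h3, h4⟩ := (e1.and (e2.and (e3.and e4))).exists
  rw [slope_def_field] at h1 h2
  have hsx : s - x < 0 := by linarith
  have hfs : f s - f x < 0 := by
    have := mul_neg_of_pos_of_neg h1 hsx
    rwa [div_mul_cancel₀ _ (ne_of_lt hsx)] at this
  have hgs : g s - g x < 0 := by
    have := mul_neg_of_pos_of_neg h2 hsx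
    rwa [div_mul_cancel₀ _ (ne_of_lt hsx)] at this
  exact ⟨s, ⟨h3.le, h4.le.trans hx.2.le⟩, by linarith, by linarith⟩

/-- If two functions both have negative derivative at an interior point, they both strictly
decrease slightly to the right. -/
private lemma dec_right {f g : ℝ → ℝ} {x p q : ℝ} (hx : x ∈ Set.Ioo (0:ℝ) 1)
    (hp : HasDerivAt f p x) (hq : HasDerivAt g q x) (hp0 : p < 0) (hq0 : q < 0) :
    ∃ s ∈ Set.Icc (0:ℝ) 1, f s < f x ∧ g s < g x := by
  have hmono : 𝓝[>] x ≤ 𝓝[≠] x :=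
    nhdsWithin_mono x (fun y hy => Set.mem_compl_singleton_iff.mpr (ne_of_gt hy))
  have hPt : Tendsto (slope f x) (𝓝[>] x) (𝓝 p) :=
    (hasDerivAt_iff_tendsto_slope.mp hp).mono_left hmono
  have hQt : Tendsto (slope g x) (𝓝[>] x) (𝓝 q) :=
    (hasDerivAt_iff_tendsto_slope.mp hq).mono_left hmono
  have e1 : ∀ᶠ s in 𝓝[>] x, slope f x s < 0 := hPt.eventually (eventually_lt_nhds hp0)
  have e2 : ∀ᶠ s in 𝓝[>] x, slope g x s < 0 := hQt.eventually (eventually_lt_nhds hq0)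
  have e3 : ∀ᶠ s in 𝓝[>] x, s < 1 :=
    ((eventually_lt_nhds hx.2).filter_mono nhdsWithin_le_nhds)
  have e4 : ∀ᶠ s in 𝓝[>] x, x < s := eventually_mem_nhdsWithin
  obtain ⟨s, h1, h2, h3, h4⟩ := (e1.and (e2.and (e3.and e4))).exists
  rw [slope_def_field] at h1 h2
  have hsx : 0 < s - x := by linarith
  have hfs : f s - f x < 0 := by
    have := mul_neg_of_neg_of_pos h1 hsx
    rwa [div_mul_cancel₀ _ (ne_of_gt hsx)] at this
  have hgs : g s - g x < 0 := by
    have := mul_neg_of_neg_of_pos h2 hsx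
    rwa [div_mul_cancel₀ _ (ne_of_gt hsx)] at this
  exact ⟨s, ⟨hx.1.le.trans h4.le, h3.le⟩, by linarith, by linarith⟩

/-- If at a minimizer of the max the function `f` is strictly below the min value `μ`
(so `g` attains it), then `g ≥ μ` everywhere. -/
private lemma dominant {f g : ℝ → ℝ} {μ : ℝ}
    (hf : ConvexOn ℝ (Set.Icc 0 1) f) (hg : ConvexOn ℝ (Set.Icc 0 1) g)
    {s0 : ℝ} (hs0 : s0 ∈ Set.Icc (0:ℝ) 1) (h1 : f s0 < μ) (h2 : g s0 = μ)
    (hlb : ∀ s ∈ Set.Icc (0:ℝ) 1, μ ≤ max (f s) (g s)) :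
    ∀ t ∈ Set.Icc (0:ℝ) 1, μ ≤ g t := by
  by_contra hcon
  push_neg at hcon
  obtain ⟨t, ht, hgt⟩ := hcon
  set d : ℝ := μ - f s0 with hd
  have hd0 : 0 < d := by simp [hd]; linarith
  set M : ℝ := max (f t - f s0) 1 with hM
  have hM0 : (0:ℝ) < M := lt_of_lt_of_le one_pos (le_max_right _ _)
  set l : ℝ := min (1/2 : ℝ) (d / (2 * M)) with hl
  have hl0 : 0 < l := lt_min (by norm_num) (by positivity)
  have hl1 : l ≤ 1/2 := min_le_left _ _
  have habm : (1 - l) + l = 1 := by ring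
  have humem : (1 - l) • s0 + l • t ∈ Set.Icc (0:ℝ) 1 :=
    hf.1 hs0 ht (by linarith) hl0.le habm
  have hfu : f ((1 - l) • s0 + l • t) ≤ (1 - l) * f s0 + l * f t := by
    simpa [smul_eq_mul] using hf.2 hs0 ht (by linarith : (0:ℝ) ≤ 1 - l) hl0.le habm
  have hgu : g ((1 - l) • s0 + l • t) ≤ (1 - l) * g s0 + l * g t := by
    simpa [smul_eq_mul] using hg.2 hs0 ht (by linarith : (0:ℝ) ≤ 1 - l) hl0.le habm
  have hA : l * (f t - f s0) ≤ l * M := mul_le_mul_of_nonneg_left (le_max_left _ _) hl0.le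
  have hB : l * M ≤ d / 2 := by
    have hle : l ≤ d / (2 * M) := min_le_right _ _
    have := mul_le_mul_of_nonneg_right hle hM0.le
    calc l * M ≤ (d / (2 * M)) * M := this
      _ = d / 2 := by field_simp
  have hfu' : f ((1 - l) • s0 + l • t) < μ := by
    have : (1 - l) * f s0 + l * f t = f s0 + l * (f t - f s0) := by ring
    rw [this] at hfu
    have : f s0 + l * (f t - f s0) ≤ f s0 + d / 2 := by linarith
    have hdd : f s0 + d / 2 < μ := by simp [hd] at *; linarith
    linarith
  have hgu' : g ((1 - l) • s0 + l • t) < μ := by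
    have hneg : l * (g t - μ) < 0 := mul_neg_of_pos_of_neg hl0 (by linarith)
    have : (1 - l) * g s0 + l * g t = μ + l * (g t - μ) := by rw [h2]; ring
    linarith
  have := hlb _ humem
  have hmax : max (f ((1 - l) • s0 + l • t)) (g ((1 - l) • s0 + l • t)) < μ := max_lt hfu' hgu'
  linarith

theorem exists_gamma_combination (μP μQ : ℝ → ℝ)
    (hPc : ContinuousOn μP (Set.Icc 0 1)) (hQc : ContinuousOn μQ (Set.Icc 0 1))
    (hPconv : ConvexOn ℝ (Set.Icc 0 1) μP) (hQconv : ConvexOn ℝ (Set.Icc 0 1) μQ)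
    (hPd : DifferentiableOn ℝ μP (Set.Ioo 0 1))
    (hQd : DifferentiableOn ℝ μQ (Set.Ioo 0 1))
    (hP0 : μP 0 = 0) (hP1 : μP 1 = 0) (hQ0 : μQ 0 = 0) (hQ1 : μQ 1 = 0)
    (μstar : ℝ)
    (hstar : IsLeast ((fun s => max (μP s) (μQ s)) '' Set.Icc 0 1) μstar) :
    ∃ γ ∈ Set.Icc (0 : ℝ) 1, ∀ s ∈ Set.Icc (0 : ℝ) 1,
      γ * μP s + (1 - γ) * μQ s ≥ μstar := by
  obtain ⟨⟨s0, hs0, hs0eq⟩, hub⟩ := hstar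
  replace hs0eq : max (μP s0) (μQ s0) = μstar := hs0eq
  have hlb : ∀ s ∈ Set.Icc (0:ℝ) 1, μstar ≤ max (μP s) (μQ s) := fun s hs => hub ⟨s, hs, rfl⟩
  have h0mem : (0:ℝ) ∈ Set.Icc (0:ℝ) 1 := ⟨le_refl 0, zero_le_one⟩
  have h1mem : (1:ℝ) ∈ Set.Icc (0:ℝ) 1 := ⟨zero_le_one, le_refl 1⟩
  have hμle0 : μstar ≤ 0 := by
    have := hlb 0 h0mem
    rw [hP0, hQ0] at this; simpa using this
  by_cases h0 : μstar = 0
  · -- μstar = 0 : one of the two functions is ≥ 0 on [0,1]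
    subst h0
    have hPle : ∀ s ∈ Set.Icc (0:ℝ) 1, μP s ≤ 0 := by
      intro s hs
      have := hPconv.2 h0mem h1mem (by linarith [hs.2] : (0:ℝ) ≤ 1 - s) hs.1 (by ring)
      simpa [smul_eq_mul, hP0, hP1] using this
    have hQle : ∀ s ∈ Set.Icc (0:ℝ) 1, μQ s ≤ 0 := by
      intro s hs
      have := hQconv.2 h0mem h1mem (by linarith [hs.2] : (0:ℝ) ≤ 1 - s) hs.1 (by ring)
      simpa [smul_eq_mul, hQ0, hQ1] using this
    by_cases hPall : ∀ s ∈ Set.Icc (0:ℝ) 1, (0:ℝ) ≤ μP s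
    · exact ⟨1, ⟨zero_le_one, le_refl 1⟩, fun s hs => by simpa using hPall s hs⟩
    by_cases hQall : ∀ s ∈ Set.Icc (0:ℝ) 1, (0:ℝ) ≤ μQ s
    · exact ⟨0, ⟨le_refl 0, zero_le_one⟩, fun s hs => by simpa using hQall s hs⟩
    exfalso
    push_neg at hPall hQall
    obtain ⟨t, ht, hPt⟩ := hPall
    obtain ⟨s, hs, hQs⟩ := hQall
    have habm : (1/2 : ℝ) + 1/2 = 1 := by norm_num
    have humem : (1/2 : ℝ) • s + (1/2 : ℝ) • t ∈ Set.Icc (0:ℝ) 1 :=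
      hPconv.1 hs ht (by norm_num) (by norm_num) habm
    have hfu := hPconv.2 hs ht (by norm_num : (0:ℝ) ≤ 1/2) (by norm_num : (0:ℝ) ≤ 1/2) habm
    have hgu := hQconv.2 hs ht (by norm_num : (0:ℝ) ≤ 1/2) (by norm_num : (0:ℝ) ≤ 1/2) habm
    simp only [smul_eq_mul] at hfu hgu
    have hPs := hPle s hs
    have hQt := hQle t ht
    have := hlb _ humem
    have hmax : max (μP ((1/2:ℝ) • s + (1/2:ℝ) • t)) (μQ ((1/2:ℝ) • s + (1/2:ℝ) • t)) < 0 := by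
      apply max_lt
      · calc μP ((1/2:ℝ) • s + (1/2:ℝ) • t) ≤ 1/2 * μP s + 1/2 * μP t := by
              simpa [smul_eq_mul] using hfu
          _ < 0 := by linarith
      · calc μQ ((1/2:ℝ) • s + (1/2:ℝ) • t) ≤ 1/2 * μQ s + 1/2 * μQ t := by
              simpa [smul_eq_mul] using hgu
          _ < 0 := by linarith
    linarith
  · have hμlt0 : μstar < 0 := lt_of_le_of_ne hμle0 h0
    rcases lt_trichotomy (μP s0) (μQ s0) with hlt | heq | hgt
    · -- μQ dominates
      have hq : μQ s0 = μstar := by rw [max_eq_right hlt.le] at hs0eq; exact hs0eq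
      have hdom := dominant hPconv hQconv hs0 (by linarith) hq hlb
      exact ⟨0, ⟨le_refl 0, zero_le_one⟩, fun s hs => by simpa using hdom s hs⟩
    · -- equal case: use derivatives at the interior minimizer
      have hPs0 : μP s0 = μstar := by rw [← hs0eq, heq, max_self]
      have hQs0 : μQ s0 = μstar := by rw [← hs0eq, heq, max_self]
      have hne0 : s0 ≠ 0 := by
        intro h; rw [h, hP0] at hPs0; linarith
      have hne1 : s0 ≠ 1 := by
        intro h; rw [h, hP1] at hPs0; linarith
      have hs0i : s0 ∈ Set.Ioo (0:ℝ) 1 :=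
        ⟨lt_of_le_of_ne hs0.1 (Ne.symm hne0), lt_of_le_of_ne hs0.2 hne1⟩
      have hPdiff : DifferentiableAt ℝ μP s0 :=
        (hPd s0 hs0i).differentiableAt (isOpen_Ioo.mem_nhds hs0i)
      have hQdiff : DifferentiableAt ℝ μQ s0 :=
        (hQd s0 hs0i).differentiableAt (isOpen_Ioo.mem_nhds hs0i)
      set p : ℝ := deriv μP s0 with hpdef
      set q : ℝ := deriv μQ s0 with hqdef
      have hp : HasDerivAt μP p s0 := hPdiff.hasDerivAt
      have hq : HasDerivAt μQ q s0 := hQdiff.hasDerivAt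
      have hnotpos : ¬(0 < p ∧ 0 < q) := by
        rintro ⟨hp0, hq0⟩
        obtain ⟨s, hsm, h1, h2⟩ := dec_left hs0i hp hq hp0 hq0
        have := hlb s hsm
        have : max (μP s) (μQ s) < μstar := max_lt (by linarith) (by linarith)
        linarith [hlb s hsm]
      have hnotneg : ¬(p < 0 ∧ q < 0) := by
        rintro ⟨hp0, hq0⟩
        obtain ⟨s, hsm, h1, h2⟩ := dec_right hs0i hp hq hp0 hq0
        have : max (μP s) (μQ s) < μstar := max_lt (by linarith) (by linarith)
        linarith [hlb s hsm]
      by_cases hpq : p = q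
      · -- then p = q = 0, take γ = 1
        have hp0 : p = 0 := by
          rcases lt_trichotomy p 0 with h | h | h
          · exact absurd ⟨h, hpq ▸ h⟩ hnotneg
          · exact h
          · exact absurd ⟨h, hpq ▸ h⟩ hnotpos
        refine ⟨1, ⟨zero_le_one, le_refl 1⟩, fun s hs => ?_⟩
        have := gradIneq hPconv hs0 hs hp
        rw [hp0, hPs0] at this
        simp only [one_mul, sub_self, zero_mul]
        linarith
      · -- take γ = q / (q - p)
        have hqp : q - p ≠ 0 := sub_ne_zero.mpr (Ne.symm hpq)
        set γ : ℝ := q / (q - p) with hγdef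
        have key : γ * (q - p) = q := div_mul_cancel₀ _ hqp
        have hsign : (0 ≤ p ∧ q ≤ 0) ∨ (p ≤ 0 ∧ 0 ≤ q) := by
          rcases lt_trichotomy p 0 with hp' | hp' | hp' <;>
            rcases lt_trichotomy q 0 with hq' | hq' | hq'
          · exact absurd ⟨hp', hq'⟩ hnotneg
          · right; exact ⟨hp'.le, hq'.ge⟩
          · right; exact ⟨hp'.le, hq'.le⟩
          · left; exact ⟨hp'.ge, hq'.le⟩
          · left; exact ⟨hp'.ge, hq'.le⟩
          · right; exact ⟨hp'.le, hq'.le⟩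
          · left; exact ⟨hp'.le, hq'.le⟩
          · left; exact ⟨hp'.le, hq'.le⟩
          · exact absurd ⟨hp', hq'⟩ hnotpos
        have hγ01 : 0 ≤ γ ∧ γ ≤ 1 := by
          rcases hsign with ⟨hp', hq'⟩ | ⟨hp', hq'⟩
          · have hneg : q - p < 0 := lt_of_le_of_ne (by linarith) hqp
            constructor
            · rw [hγdef, le_div_iff_of_neg hneg]; linarith
            · rw [hγdef, div_le_iff_of_neg hneg]; linarith
          · have hpos : 0 < q - p := lt_of_le_of_ne (by linarith) (Ne.symm hqp)
            constructor
            · exact div_nonneg hq' hpos.le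
            · rw [hγdef, div_le_iff₀ hpos]; linarith
        obtain ⟨hγ0, hγ1⟩ := hγ01
        have hderiv0 : γ * p + (1 - γ) * q = 0 := by linear_combination -key
        have hconv : ConvexOn ℝ (Set.Icc 0 1) (fun x => γ * μP x + (1 - γ) * μQ x) :=
          (hPconv.smul hγ0).add (hQconv.smul (by linarith))
        have hderivh : HasDerivAt (fun x => γ * μP x + (1 - γ) * μQ x) 0 s0 := by
          have := (hp.const_mul γ).add (hq.const_mul (1 - γ))
          rwa [hderiv0] at this
        refine ⟨γ, ⟨hγ0, hγ1⟩, fun s hs => ?_⟩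
        have hh : γ * μP s0 + (1 - γ) * μQ s0 + 0 * (s - s0) ≤ γ * μP s + (1 - γ) * μQ s :=
          gradIneq hconv hs0 hs hderivh
        rw [hPs0, hQs0] at hh
        have : γ * μstar + (1 - γ) * μstar = μstar := by ring
        linarith
    · -- μP dominates
      have hp' : μP s0 = μstar := by rw [max_eq_left hgt.le] at hs0eq; exact hs0eq
      have hlb' : ∀ s ∈ Set.Icc (0:ℝ) 1, μstar ≤ max (μQ s) (μP s) := by
        intro s hs; rw [max_comm]; exact hlb s hs
      have hdom := dominant hQconv hPconv hs0 (by linarith) hp' hlb'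
      exact ⟨1, ⟨zero_le_one, le_refl 1⟩, fun s hs => by simpa using hdom s hs⟩
end
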